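/- arXiv:1807.11890 — 2 statements merged into one kernel-verified Lean document; each statement's English description precedes it below -/
import Mathlib

section
/- There exist infinitely many pairwise non-isomorphic minimal 2-Ramsey graphs for cyclicity; in particular, for every n there exists a minimal 2-Ramsey graph for cyclicity with more than n vertices. -/
/-- A graph `G` is `r`-Ramsey for cyclicity: every `r`-edge-colouring admits a
monochromatic cycle. -/
def IsRamseyCyc {V : Type*} (r : ℕ) (G : SimpleGraph V) : Prop :=
  ∀ c : Sym2 V → Fin r, ∃ (v : V) (w : G.Walk v v), w.IsCycle ∧
    ∃ i : Fin r, ∀ e ∈ w.edges, c e = i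

/-- `G` is a minimal `r`-Ramsey graph for cyclicity. -/
def IsMinRamseyCyc {V : Type*} (r : ℕ) (G : SimpleGraph V) : Prop :=
  IsRamseyCyc r G ∧ ∀ H : G.Subgraph, H ≠ ⊤ → ¬ IsRamseyCyc r H.coe


open SimpleGraph

section Instances

variable {V : Type*}

instance decAdjSdiff [DecidableEq V] {G H : SimpleGraph V} [DecidableRel G.Adj]
    [DecidableRel H.Adj] : DecidableRel (G \ H).Adj := fun a b =>
  decidable_of_iff (G.Adj a b ∧ ¬ H.Adj a b) (by simp [sdiff_adj])

instance decAdjFromEdgeSet [DecidableEq V] (e : Sym2 V) :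
    DecidableRel (SimpleGraph.fromEdgeSet {e}).Adj := fun a b =>
  decidable_of_iff (s(a,b) = e ∧ a ≠ b) (by simp [fromEdgeSet_adj])

instance decAdjFromRel [DecidableEq V] (r : V → V → Prop) [DecidableRel r] :
    DecidableRel (SimpleGraph.fromRel r).Adj := fun a b =>
  decidable_of_iff (a ≠ b ∧ (r a b ∨ r b a)) (by simp [fromRel_adj])

instance decIsBridge [Fintype V] [DecidableEq V] (G : SimpleGraph V) [DecidableRel G.Adj]
    (v w : V) : Decidable (G.IsBridge s(v,w)) := decidable_of_iff' _ isBridge_iff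

instance decIsAcyclic [Fintype V] [DecidableEq V] (G : SimpleGraph V) [DecidableRel G.Adj] :
    Decidable G.IsAcyclic :=
  decidable_of_iff (∀ v w : V, G.Adj v w → G.IsBridge s(v, w))
    (by rw [isAcyclic_iff_forall_adj_isBridge])

end Instances

section AcyclicBound

variable {V : Type*} [Fintype V] {G : SimpleGraph V}

/-- first-edge uniqueness in a path: a path starting at `z` has at most one edge through `z`. -/
lemma path_edge_start_unique {z t : V} (p : G.Walk z t) (hp : p.IsPath) {e f : Sym2 V}
    (he : e ∈ p.edges) (hf : f ∈ p.edges) (hze : z ∈ e) (hzf : z ∈ f) : e = f := by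
  cases p with
  | nil => simp at he
  | cons h q =>
    rename_i m _
    have hq : ∀ g ∈ q.edges, z ∉ g := by
      intro g hg hzg
      obtain ⟨y, rfl⟩ := Sym2.mem_iff_exists.mp hzg
      have : z ∈ q.support := q.fst_mem_support_of_mem_edges hg
      have hnd := (Walk.cons_isPath_iff h q).mp hp
      exact hnd.2 this
    rw [Walk.edges_cons] at he hf
    rcases List.mem_cons.mp he with rfl | he
    · rcases List.mem_cons.mp hf with rfl | hf
      · rfl
      · exact absurd hzf (hq _ hf)
    · exact absurd hze (hq _ he)

lemma acyclic_ncard_le [Nonempty V] (hG : G.IsAcyclic) :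
    G.edgeSet.ncard ≤ Fintype.card V - 1 := by
  classical
  set root : V → V := fun x => (G.connectedComponentMk x).out with hroot_def
  have hroot : ∀ x, G.Reachable x (root x) := by
    intro x
    have : G.connectedComponentMk ((G.connectedComponentMk x).out) = G.connectedComponentMk x :=
      (G.connectedComponentMk x).out_eq
    exact (SimpleGraph.ConnectedComponent.eq.mp this).symm
  have key : ∀ e ∈ G.edgeSet, ∃ z, z ∈ e ∧ ¬ (G \ fromEdgeSet {e}).Reachable z (root z) := by
    intro e he
    induction e with
    | _ x y =>
      have hxy : G.Adj x y := he
      have hb : ¬ (G \ fromEdgeSet {s(x,y)}).Reachable x y :=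
        isBridge_iff.mp (isAcyclic_iff_forall_adj_isBridge.mp hG hxy)
      by_contra hcon
      push_neg at hcon
      have hx := hcon x (Sym2.mem_mk_left x y)
      have hy := hcon y (Sym2.mem_mk_right x y)
      have hsame : root x = root y := by
        have h : G.connectedComponentMk x = G.connectedComponentMk y :=
          SimpleGraph.ConnectedComponent.eq.mpr ⟨hxy.toWalk⟩
        simp only [hroot_def, h]
      have : (G \ fromEdgeSet {s(x,y)}).Reachable x y := (hx.trans (hsame ▸ hy.symm))
      exact hb this
  let φ : Sym2 V → V := fun e => if he : e ∈ G.edgeSet then Classical.choose (key e he) else Classical.arbitrary V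
  have hφmem : ∀ e (he : e ∈ G.edgeSet), φ e ∈ e ∧ ¬ (G \ fromEdgeSet {e}).Reachable (φ e) (root (φ e)) := by
    intro e he
    simp only [φ, dif_pos he]
    exact Classical.choose_spec (key e he)
  -- every G-path from `φ e` to its root passes through e
  have hpass : ∀ e (he : e ∈ G.edgeSet) {t : V} (p : G.Walk (φ e) t) (hp : p.IsPath)
      (ht : t = root (φ e)), e ∈ p.edges := by
    intro e he t p hp ht
    by_contra hmem
    have hedges : ∀ f ∈ p.edges, f ∈ (G \ fromEdgeSet {e}).edgeSet := by
      intro f hf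
      have h1 : f ∈ G.edgeSet := p.edges_subset_edgeSet hf
      simp only [edgeSet_sdiff, edgeSet_fromEdgeSet, Set.mem_diff, Set.mem_setOf_eq] at *
      refine ⟨h1, ?_⟩
      rintro ⟨rfl, -⟩
      exact hmem hf
    have : (G \ fromEdgeSet {e}).Reachable (φ e) t := ⟨p.transfer _ hedges⟩
    exact (hφmem e he).2 (ht ▸ this)
  have hinj : Set.InjOn φ G.edgeSet := by
    intro e he f hf hef
    obtain ⟨p0⟩ := hroot (φ e)
    have hp := p0.toPath
    set p := p0.toPath.val with hp_def
    have hppath : p.IsPath := p0.toPath.prop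
    have h1 : e ∈ p.edges := hpass e he p hppath rfl
    have h2 : f ∈ p.edges := by
      have := hpass f hf (p.copy hef (congrArg root hef)) (by simpa using hppath) rfl
      simpa using this
    exact path_edge_start_unique p hppath h1 h2 (hφmem e he).1 (hef ▸ (hφmem f hf).1)
  -- the root of an arbitrary component is not in the image of φ
  obtain ⟨v₀⟩ := ‹Nonempty V›
  set z₀ : V := root v₀ with hz₀
  have hz₀root : root z₀ = z₀ := by
    simp only [hroot_def, hz₀]
    congr 1
    exact (G.connectedComponentMk v₀).out_eq
  have hmiss : z₀ ∉ φ '' G.edgeSet := by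
    rintro ⟨e, he, hphi⟩
    have := (hφmem e he).2
    rw [hphi, hz₀root] at this
    exact this (Reachable.refl z₀)
  have himg : φ '' G.edgeSet ⊆ Set.univ \ {z₀} := by
    intro x hx
    exact ⟨Set.mem_univ x, by rintro rfl; exact hmiss hx⟩
  calc G.edgeSet.ncard = (φ '' G.edgeSet).ncard := (Set.ncard_image_of_injOn hinj).symm
    _ ≤ (Set.univ \ {z₀}).ncard := Set.ncard_le_ncard himg (Set.toFinite _)
    _ = Fintype.card V - 1 := by
      rw [Set.ncard_diff_singleton_of_mem (Set.mem_univ z₀), Set.ncard_univ,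
        Nat.card_eq_fintype_card]

end AcyclicBound

set_option linter.unusedSectionVars false

section Ramsey

variable {V : Type*} [Fintype V]

/-- Key deletion property: for every edge there is a colouring all of whose monochromatic
cycles pass through that edge. -/
def Del (G : SimpleGraph V) : Prop :=
  ∀ e ∈ G.edgeSet, ∃ c : Sym2 V → Fin 2, ∀ (a : V) (p : G.Walk a a), p.IsCycle →
    ∀ i : Fin 2, (∀ f ∈ p.edges, c f = i) → e ∈ p.edges

lemma ramsey_of_count (G : SimpleGraph V) (h : G.edgeSet.ncard + 1 = 2 * Fintype.card V) :
    IsRamseyCyc 2 G := by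
  classical
  intro c
  by_contra hno
  push_neg at hno
  have hne : Nonempty V := by
    rcases Nat.eq_zero_or_pos (Fintype.card V) with h0 | h0
    · omega
    · exact Fintype.card_pos_iff.mp h0
  haveI := hne
  -- colour class graphs
  set K : Fin 2 → SimpleGraph V := fun i =>
    { Adj := fun a b => G.Adj a b ∧ c s(a,b) = i
      symm := ⟨fun a b hab => ⟨hab.1.symm, by rw [Sym2.eq_swap]; exact hab.2⟩⟩
      loopless := ⟨fun a ha => G.loopless.irrefl a ha.1⟩ } with hK
  have hKle : ∀ i, K i ≤ G := fun i a b hab => hab.1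
  have hKedge : ∀ i e, e ∈ (K i).edgeSet → c e = i := by
    intro i e
    induction e with
    | _ x y => exact fun he => he.2
  have hKacyclic : ∀ i, (K i).IsAcyclic := by
    intro i a p hp
    have hedges : (p.mapLe (hKle i)).edges = p.edges := by
      rw [Walk.mapLe, Walk.edges_map]
      have hid : Sym2.map ⇑(Hom.ofLE (hKle i)) = id := by
        funext f
        induction f with
        | _ x y => rfl
      simp [hid]
    obtain ⟨f, hf, hfne⟩ := hno a (p.mapLe (hKle i)) (hp.mapLe _) i
    rw [hedges] at hf
    exact hfne (hKedge i f (p.edges_subset_edgeSet hf))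
  have hcover : G.edgeSet ⊆ (K 0).edgeSet ∪ (K 1).edgeSet := by
    intro e he
    induction e with
    | _ x y =>
      have hadj : G.Adj x y := he
      have hj : c s(x,y) = 0 ∨ c s(x,y) = 1 := by
        rcases c s(x,y) with ⟨(_|_|n), hn⟩
        · exact Or.inl rfl
        · exact Or.inr rfl
        · omega
      rcases hj with hj | hj
      · exact Or.inl ⟨hadj, hj⟩
      · exact Or.inr ⟨hadj, hj⟩
  have h0 := acyclic_ncard_le (hKacyclic 0)
  have h1 := acyclic_ncard_le (hKacyclic 1)
  have hu : G.edgeSet.ncard ≤ (K 0).edgeSet.ncard + (K 1).edgeSet.ncard :=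
    le_trans (Set.ncard_le_ncard hcover (Set.toFinite _)) (Set.ncard_union_le _ _)
  have hpos : 1 ≤ Fintype.card V := Fintype.card_pos
  omega

end Ramsey

section Minimal

variable {V : Type*} [Fintype V]

lemma not_ramsey_of_del {G : SimpleGraph V} (hdeg : ∀ x, ∃ y, G.Adj x y) (hdel : Del G) :
    ∀ H : G.Subgraph, H ≠ ⊤ → ¬ IsRamseyCyc 2 H.coe := by
  classical
  intro H hH hR
  -- find a G-edge `e` that no cycle of `H.coe` can use
  have main : ∀ e ∈ G.edgeSet,
      (∀ (x y : H.verts), H.Adj x y → s((x:V), (y:V)) ≠ e) → False := by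
    intro e he hav
    obtain ⟨c, hc⟩ := hdel e he
    obtain ⟨v, p, hcyc, i, hmono⟩ := hR (fun s => c (Sym2.map Subtype.val s))
    have hinj : Function.Injective (H.hom : H.coe →g G) := Subtype.val_injective
    have hq : (p.map H.hom).IsCycle := (Walk.map_isCycle_iff_of_injective hinj).mpr hcyc
    have hqe : (p.map H.hom).edges = p.edges.map (Sym2.map Subtype.val) := by
      rw [Walk.edges_map]; rfl
    have hqmono : ∀ f ∈ (p.map H.hom).edges, c f = i := by
      intro f hf
      rw [hqe] at hf
      obtain ⟨f', hf', rfl⟩ := List.mem_map.mp hf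
      exact hmono f' hf'
    have hemem := hc _ (p.map H.hom) hq i hqmono
    rw [hqe] at hemem
    obtain ⟨f', hf', hfe⟩ := List.mem_map.mp hemem
    -- f' is an edge of H.coe
    have hf'H : f' ∈ H.coe.edgeSet := p.edges_subset_edgeSet hf'
    induction f' with
    | _ x y =>
      exact hav x y hf'H (by rw [← hfe]; rfl)
  by_cases hverts : H.verts = Set.univ
  · -- missing edge
    have hadj : ∃ a b, G.Adj a b ∧ ¬ H.Adj a b := by
      by_contra hall
      push_neg at hall
      apply hH
      ext x y
      · simp [hverts]
      · exact ⟨fun hxy => hxy.adj_sub, fun hxy => hall x y hxy⟩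
    obtain ⟨a, b, hab, hnab⟩ := hadj
    refine main s(a,b) hab ?_
    rintro ⟨x, hx⟩ ⟨y, hy⟩ hxy hfe
    rcases Sym2.eq_iff.mp hfe with ⟨rfl, rfl⟩ | ⟨rfl, rfl⟩
    · exact hnab hxy
    · exact hnab hxy.symm
  · -- missing vertex
    obtain ⟨v₀, hv₀⟩ : ∃ v₀, v₀ ∉ H.verts := by
      by_contra hall
      push_neg at hall
      exact hverts (Set.eq_univ_of_forall hall)
    obtain ⟨y₀, hy₀⟩ := hdeg v₀
    refine main s(v₀, y₀) hy₀ ?_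
    rintro ⟨x, hx⟩ ⟨y, hy⟩ hxy hfe
    rcases Sym2.eq_iff.mp hfe.symm with ⟨h1, h2⟩ | ⟨h1, h2⟩
    · exact hv₀ (h1 ▸ hx)
    · exact hv₀ (h1 ▸ hy)
end Minimal

section Plumbing

variable {V : Type*} {G : SimpleGraph V} {G' : SimpleGraph (Option V)}

/-- Lower a walk of `G'` avoiding `none` to a walk of `G`. -/
lemma lower_walk (hadj : ∀ a b : V, G'.Adj (some a) (some b) → G.Adj a b) :
    ∀ {s t : Option V} (p : G'.Walk s t), none ∉ p.support → ∀ {a b : V}, s = some a →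
      t = some b →
      ∃ q : G.Walk a b, p.edges = q.edges.map (Sym2.map some) ∧
        p.support = q.support.map some := by
  intro s t p
  induction p with
  | nil =>
    intro _ a b ha hb
    subst ha
    obtain rfl : a = b := Option.some_injective _ hb
    exact ⟨Walk.nil, by simp, by simp⟩
  | cons h q ih =>
    rename_i x m t'
    intro hnone a b ha hb
    have hms : m ∈ (Walk.cons h q).support := by
      rw [Walk.support_cons]
      exact List.mem_cons_of_mem _ q.start_mem_support
    have hm : m ≠ none := fun hmn => hnone (hmn ▸ hms)
    obtain ⟨a', rfl⟩ := Option.ne_none_iff_exists'.mp hm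
    have hnone' : none ∉ q.support := fun hq =>
      hnone (by rw [Walk.support_cons]; exact List.mem_cons_of_mem _ hq)
    obtain ⟨r, hr1, hr2⟩ := ih hnone' rfl hb
    subst ha
    refine ⟨Walk.cons (hadj _ _ h) r, ?_, ?_⟩
    · rw [Walk.edges_cons, Walk.edges_cons, hr1]; rfl
    · rw [Walk.support_cons, Walk.support_cons, hr2]; rfl

/-- Lower a cycle of `G'` avoiding `none` to a cycle of `G`. -/
lemma lower_cycle (hadj : ∀ a b : V, G'.Adj (some a) (some b) → G.Adj a b) {a : V}
    (p : G'.Walk (some a) (some a)) (hp : p.IsCycle) (hnone : none ∉ p.support) :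
    ∃ q : G.Walk a a, q.IsCycle ∧ p.edges = q.edges.map (Sym2.map some) := by
  obtain ⟨q, hq1, hq2⟩ := lower_walk hadj p hnone rfl rfl
  refine ⟨q, ?_, hq1⟩
  rw [Walk.isCycle_def] at hp ⊢
  refine ⟨?_, ?_, ?_⟩
  · rw [Walk.isTrail_def]
    have := hp.1
    rw [Walk.isTrail_def, hq1] at this
    exact this.of_map
  · intro hqnil
    have h3 := hp.2.1
    subst hqnil
    simp at hq1
    cases p with
    | nil => exact h3 rfl
    | cons h q' => simp [Walk.edges_cons] at hq1
  · have := hp.2.2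
    rw [hq2, ← List.map_tail] at this
    exact this.of_map

/-- Lower a path of `G'` avoiding `none` to a path of `G`. -/
lemma lower_path (hadj : ∀ a b : V, G'.Adj (some a) (some b) → G.Adj a b) {a b : V}
    (p : G'.Walk (some a) (some b)) (hp : p.IsPath) (hnone : none ∉ p.support) :
    ∃ q : G.Walk a b, q.IsPath ∧ p.edges = q.edges.map (Sym2.map some) := by
  obtain ⟨q, hq1, hq2⟩ := lower_walk hadj p hnone rfl rfl
  refine ⟨q, ?_, hq1⟩
  rw [Walk.isPath_def] at hp ⊢
  rw [hq2] at hp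
  exact hp.of_map

/-- Decompose a cycle passing through `none` : it consists of two edges at `none` together
with a path avoiding `none`. -/
lemma cycle_through_none [DecidableEq V] {β : Option V} (p : G'.Walk β β) (hp : p.IsCycle)
    (hn : none ∈ p.support) :
    ∃ (a b : V) (m : G'.Walk (some a) (some b)),
      a ≠ b ∧ G'.Adj none (some a) ∧ G'.Adj none (some b) ∧
      none ∉ m.support ∧ m.IsPath ∧
      (∀ f ∈ m.edges, f ∈ p.edges) ∧
      s(none, some a) ∈ p.edges ∧ s(none, some b) ∈ p.edges := by
  classical
  set p' : G'.Walk none none := p.rotate none hn with hp'def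
  have hp' : p'.IsCycle := hp.rotate hn
  have hrot : ∀ f, f ∈ p'.edges ↔ f ∈ p.edges := fun f => (p.rotate_edges none hn).mem_iff
  -- decompose p'
  cases hq : p' with
  | nil => exact absurd (hq ▸ hp') (by simp [Walk.isCycle_def])
  | cons h₁ q =>
    rename_i s₁
    have hs₁ : s₁ ≠ none := fun hs => G'.loopless.irrefl none (hs ▸ h₁)
    obtain ⟨a, rfl⟩ := Option.ne_none_iff_exists'.mp hs₁
    cases hr : q.reverse with
    | cons h₂ m =>
      rename_i s₂
      have hs₂ : s₂ ≠ none := fun hs => G'.loopless.irrefl none (hs ▸ h₂)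
      obtain ⟨b, rfl⟩ := Option.ne_none_iff_exists'.mp hs₂
      have hcyc : (Walk.cons h₁ q).IsCycle := hq ▸ hp'
      have hnodup : q.support.Nodup := by
        have h' := hcyc
        rw [Walk.isCycle_def] at h'
        simpa [Walk.support_cons] using h'.2.2
      have hqsupp : q.support = m.support.reverse ++ [none] := by
        have h1 : q.support.reverse = none :: m.support := by
          rw [← Walk.support_reverse, hr, Walk.support_cons]
        have h2 := congrArg List.reverse h1
        simpa using h2
      have hqedges : q.edges = m.edges.reverse ++ [s(none, some b)] := by
        have h1 : q.edges.reverse = s(none, some b) :: m.edges := by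
          rw [← Walk.edges_reverse, hr, Walk.edges_cons]
        have h2 := congrArg List.reverse h1
        simpa using h2
      have hp'edges : p'.edges = s(none, some a) :: q.edges := by
        rw [hq, Walk.edges_cons]
      rw [hqsupp] at hnodup
      have hmnodup : m.support.Nodup := by
        have := (List.nodup_append.mp hnodup).1
        simpa using this
      have hmnone : none ∉ m.support := by
        have := (List.nodup_append.mp hnodup).2.2
        intro hmem
        exact this _ (List.mem_reverse.mpr hmem) _ (by simp) rfl
      have hmemq : ∀ f ∈ m.edges, f ∈ q.edges := by
        intro f hf
        rw [hqedges]
        exact List.mem_append_left _ (by simpa using hf)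
      have hmemp : ∀ f ∈ q.edges, f ∈ p.edges := by
        intro f hf
        exact (hrot f).mp (by rw [hp'edges]; exact List.mem_cons_of_mem _ hf)
      have hab : b ≠ a := by
        rintro rfl
        cases m with
        | nil =>
          have htrail := hcyc.isTrail.edges_nodup
          rw [show (Walk.cons h₁ q).edges = p'.edges from (by rw [hq]), hp'edges, hqedges] at htrail
          simp at htrail
        | cons h' m' =>
          have h1 : some b ∈ m'.support := m'.end_mem_support
          have h2 : (Walk.cons h' m').support = some b :: m'.support := Walk.support_cons _ _
          rw [h2] at hmnodup
          exact (List.nodup_cons.mp hmnodup).1 h1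
      refine ⟨b, a, m, hab, h₂, h₁, hmnone, ?_, ?_, ?_, ?_⟩
      · rw [Walk.isPath_def]; exact hmnodup
      · exact fun f hf => hmemp f (hmemq f hf)
      · exact hmemp _ (by rw [hqedges]; simp)
      · exact (hrot _).mp (by rw [hp'edges]; simp)

end Plumbing

section Ext

variable {V : Type*} [DecidableEq V]

/-- The extension operation: add a new vertex `none` joined to `u`, `v`, `w` and delete the
edge `vw`. -/
def extG (G : SimpleGraph V) (u v w : V) : SimpleGraph (Option V) where
  Adj x y := match x, y with
    | some a, some b => G.Adj a b ∧ s(a,b) ≠ s(v,w)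
    | some a, none => a = u ∨ a = v ∨ a = w
    | none, some b => b = u ∨ b = v ∨ b = w
    | none, none => False
  symm := by
    constructor
    rintro (_|a) (_|b) h
    · exact h
    · exact h
    · exact h
    · exact ⟨h.1.symm, by rw [Sym2.eq_swap]; exact h.2⟩
  loopless := by
    constructor
    rintro (_|a) h
    · exact h
    · exact G.loopless.irrefl a h.1

variable {G : SimpleGraph V} {u v w : V}

lemma extG_adj_some_some {a b : V} :
    (extG G u v w).Adj (some a) (some b) ↔ G.Adj a b ∧ s(a,b) ≠ s(v,w) := Iff.rfl

lemma extG_adj_none_some {b : V} :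
    (extG G u v w).Adj none (some b) ↔ (b = u ∨ b = v ∨ b = w) := Iff.rfl

/-- a symmetric colouring of `Sym2 (Option V)` from one of `Sym2 V` plus values on the
edges at `none`. -/
def liftc (c : Sym2 V → Fin 2) (d : V → Fin 2) : Sym2 (Option V) → Fin 2 :=
  Sym2.lift ⟨fun x y => match x, y with
    | some a, some b => c s(a,b)
    | some a, none => d a
    | none, some b => d b
    | none, none => 0, by
      rintro (_|a) (_|b)
      · rfl
      · rfl
      · rfl
      · show c s(a,b) = c s(b,a)
        rw [Sym2.eq_swap]⟩

@[simp] lemma liftc_some_some (c : Sym2 V → Fin 2) (d : V → Fin 2) (a b : V) :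
    liftc c d s(some a, some b) = c s(a,b) := rfl

@[simp] lemma liftc_none_some (c : Sym2 V → Fin 2) (d : V → Fin 2) (b : V) :
    liftc c d s(none, some b) = d b := rfl

@[simp] lemma liftc_map_some (c : Sym2 V → Fin 2) (d : V → Fin 2) (f : Sym2 V) :
    liftc c d (Sym2.map some f) = c f := by
  induction f with
  | _ x y => rfl

/-- monochromatic cycles avoiding `none` come from monochromatic cycles of `G` avoiding
the edge `vw`. -/
lemma extG_no_none {c : Sym2 V → Fin 2} {d : V → Fin 2} {i : Fin 2} {β : Option V}
    (p : (extG G u v w).Walk β β) (hp : p.IsCycle) (hnone : none ∉ p.support)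
    (hmono : ∀ f ∈ p.edges, liftc c d f = i) :
    ∃ (a : V) (q : G.Walk a a), q.IsCycle ∧ s(v,w) ∉ q.edges ∧ (∀ f ∈ q.edges, c f = i) ∧
      (∀ f ∈ q.edges, Sym2.map some f ∈ p.edges) := by
  have hβ : β ≠ none := fun hβ => hnone (hβ ▸ p.start_mem_support)
  obtain ⟨a, rfl⟩ := Option.ne_none_iff_exists'.mp hβ
  obtain ⟨q, hq, hqe⟩ := lower_cycle (G := G) (fun a b (h : (extG G u v w).Adj (some a) (some b)) => h.1) p hp hnone
  have hmem : ∀ f ∈ q.edges, Sym2.map some f ∈ p.edges := by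
    intro f hf
    rw [hqe]
    exact List.mem_map_of_mem hf
  refine ⟨a, q, hq, ?_, ?_, hmem⟩
  · intro hvwq
    have := p.edges_subset_edgeSet (hmem _ hvwq)
    rw [Sym2.map_pair_eq] at this
    exact (this : (extG G u v w).Adj (some v) (some w)).2 rfl
  · intro f hf
    have := hmono _ (hmem f hf)
    rwa [liftc_map_some] at this

/-- monochromatic cycles through `none` give a monochromatic `G`-path between two of
`u,v,w` (avoiding the edge `vw`), whose endpoints get equal `d`-values. -/
lemma extG_with_none {c : Sym2 V → Fin 2} {d : V → Fin 2} {i : Fin 2} {β : Option V}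
    (p : (extG G u v w).Walk β β) (hp : p.IsCycle) (hnone : none ∈ p.support)
    (hmono : ∀ f ∈ p.edges, liftc c d f = i) :
    ∃ (x y : V) (P : G.Walk x y), x ≠ y ∧ (x = u ∨ x = v ∨ x = w) ∧ (y = u ∨ y = v ∨ y = w) ∧
      d x = i ∧ d y = i ∧ P.IsPath ∧ s(v,w) ∉ P.edges ∧ (∀ f ∈ P.edges, c f = i) ∧
      (∀ f ∈ P.edges, Sym2.map some f ∈ p.edges) ∧
      s(none, some x) ∈ p.edges ∧ s(none, some y) ∈ p.edges := by
  obtain ⟨x, y, m, hxy, hax, hay, hmn, hmp, hme, hex, hey⟩ := cycle_through_none p hp hnone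
  obtain ⟨P, hP, hPe⟩ := lower_path (G := G) (fun a b (h : (extG G u v w).Adj (some a) (some b)) => h.1) m hmp hmn
  have hmem : ∀ f ∈ P.edges, Sym2.map some f ∈ p.edges := by
    intro f hf
    exact hme _ (by rw [hPe]; exact List.mem_map_of_mem hf)
  refine ⟨x, y, P, hxy, hax, hay, ?_, ?_, hP, ?_, ?_, hmem, hex, hey⟩
  · have := hmono _ hex
    rwa [liftc_none_some] at this
  · have := hmono _ hey
    rwa [liftc_none_some] at this
  · intro hvwP
    have := p.edges_subset_edgeSet (hmem _ hvwP)
    rw [Sym2.map_pair_eq] at this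
    exact (this : (extG G u v w).Adj (some v) (some w)).2 rfl
  · intro f hf
    have := hmono _ (hmem f hf)
    rwa [liftc_map_some] at this

end Ext

section ExtDel

variable {V : Type*} [Fintype V] [DecidableEq V] {G : SimpleGraph V} {u v w : V}

lemma fin2_sub_ne (i : Fin 2) : 1 - i ≠ i := by fin_cases i <;> decide

lemma extG_del (huv : G.Adj u v) (hvw : G.Adj v w) (huw : u ≠ w) (hdel : Del G) :
    Del (extG G u v w) := by
  classical
  have hvne : u ≠ v := huv.ne
  have hwne : v ≠ w := hvw.ne
  -- treatment of the three new edges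
  have hnew : ∀ z : V, (z = u ∨ z = v ∨ z = w) →
      ∃ c' : Sym2 (Option V) → Fin 2, ∀ (β : Option V) (p : (extG G u v w).Walk β β),
        p.IsCycle → ∀ j : Fin 2, (∀ f ∈ p.edges, c' f = j) → s(none, some z) ∈ p.edges := by
    intro z hz
    obtain ⟨c, hc⟩ := hdel s(v,w) hvw
    set d : V → Fin 2 := if z = w then (fun a => if a = u then 1 else 0)
      else (fun a => if a = w then 1 else 0) with hd
    refine ⟨liftc c d, ?_⟩
    intro β p hp j hmono
    by_cases hnone : none ∈ p.support
    · obtain ⟨x, y, P, hxy, hax, hay, hdx, hdy, hPp, hPvw, hPc, hPmem, hex, hey⟩ :=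
        extG_with_none p hp hnone hmono
      have hgoal : x = z ∨ y = z := by
        rcases hz with rfl | rfl | rfl
        · -- z = u : d sends w ↦ 1, others ↦ 0
          rw [if_neg huw] at hd
          rw [hd] at hdx hdy
          have h1 : (if x = w then (1:Fin 2) else 0) = j := hdx
          have h2 : (if y = w then (1:Fin 2) else 0) = j := hdy
          rcases hax with rfl | rfl | rfl
          · exact Or.inl rfl
          · rcases hay with rfl | rfl | rfl
            · exact Or.inr rfl
            · exact absurd rfl hxy
            · rw [if_neg hwne] at h1
              rw [if_pos rfl] at h2
              exact absurd (h1.trans h2.symm) (by decide)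
          · rcases hay with rfl | rfl | rfl
            · exact Or.inr rfl
            · rw [if_pos rfl] at h1
              rw [if_neg hwne] at h2
              exact absurd (h1.trans h2.symm) (by decide)
            · exact absurd rfl hxy
        · -- z = v : d sends w ↦ 1, others ↦ 0
          rw [if_neg hwne] at hd
          rw [hd] at hdx hdy
          have h1 : (if x = w then (1:Fin 2) else 0) = j := hdx
          have h2 : (if y = w then (1:Fin 2) else 0) = j := hdy
          rcases hax with rfl | rfl | rfl
          · rcases hay with rfl | rfl | rfl
            · exact absurd rfl hxy
            · exact Or.inr rfl
            · rw [if_neg huw] at h1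
              rw [if_pos rfl] at h2
              exact absurd (h1.trans h2.symm) (by decide)
          · exact Or.inl rfl
          · rcases hay with rfl | rfl | rfl
            · rw [if_pos rfl] at h1
              rw [if_neg huw] at h2
              exact absurd (h1.trans h2.symm) (by decide)
            · exact Or.inr rfl
            · exact absurd rfl hxy
        · -- z = w : d sends u ↦ 1, others ↦ 0
          rw [if_pos rfl] at hd
          rw [hd] at hdx hdy
          have h1 : (if x = u then (1:Fin 2) else 0) = j := hdx
          have h2 : (if y = u then (1:Fin 2) else 0) = j := hdy
          rcases hax with rfl | rfl | rfl
          · rcases hay with rfl | rfl | rfl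
            · exact absurd rfl hxy
            · rw [if_pos rfl] at h1
              rw [if_neg (Ne.symm hvne)] at h2
              exact absurd (h1.trans h2.symm) (by decide)
            · exact Or.inr rfl
          · rcases hay with rfl | rfl | rfl
            · rw [if_neg (Ne.symm hvne)] at h1
              rw [if_pos rfl] at h2
              exact absurd (h1.trans h2.symm) (by decide)
            · exact absurd rfl hxy
            · exact Or.inr rfl
          · exact Or.inl rfl
      rcases hgoal with rfl | rfl
      · exact hex
      · exact hey
    · obtain ⟨a', q, hq, hqvw, hqc, hqmem⟩ := extG_no_none p hp hnone hmono
      exact absurd (hc _ q hq j hqc) hqvw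
  intro e' he'
  induction e' with
  | _ x₀ y₀ =>
  match x₀, y₀, he' with
  | some a, some b, he' =>
    -- e' is an old edge ≠ vw
    have hGab : G.Adj a b ∧ s(a,b) ≠ s(v,w) := he'
    obtain ⟨c, hc⟩ := hdel s(a,b) hGab.1
    set i₀ : Fin 2 := c s(v,w) with hi₀
    refine ⟨liftc c (fun z => if z = u then 1 - i₀ else i₀), ?_⟩
    intro β p hp j hmono
    by_cases hnone : none ∈ p.support
    · obtain ⟨x, y, P, hxy, hax, hay, hdx, hdy, hPp, hPvw, hPc, hPmem, hex, hey⟩ :=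
        extG_with_none p hp hnone hmono
      have h1 : (if x = u then 1 - i₀ else i₀) = j := hdx
      have h2 : (if y = u then 1 - i₀ else i₀) = j := hdy
      have hkey : (x = v ∧ y = w) ∨ (x = w ∧ y = v) := by
        have hcontra : ∀ z1 z2 : V, z1 = u → z2 ≠ u →
            (if z1 = u then 1 - i₀ else i₀) = j → (if z2 = u then 1 - i₀ else i₀) = j → False := by
          rintro z1 z2 rfl hz2 ha hb
          rw [if_pos rfl] at ha
          rw [if_neg hz2] at hb
          exact fin2_sub_ne i₀ (ha.trans hb.symm)
        rcases hax with rfl | rfl | rfl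
        · rcases hay with rfl | rfl | rfl
          · exact absurd rfl hxy
          · exact (hcontra _ _ rfl (Ne.symm hvne) h1 h2).elim
          · exact (hcontra _ _ rfl (fun h => huw h.symm) h1 h2).elim
        · rcases hay with rfl | rfl | rfl
          · exact (hcontra _ _ rfl (Ne.symm hvne) h2 h1).elim
          · exact absurd rfl hxy
          · exact Or.inl ⟨rfl, rfl⟩
        · rcases hay with rfl | rfl | rfl
          · exact (hcontra _ _ rfl (fun h => huw h.symm) h2 h1).elim
          · exact Or.inr ⟨rfl, rfl⟩
          · exact absurd rfl hxy
      have hji : j = i₀ := by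
        rcases hkey with ⟨rfl, -⟩ | ⟨rfl, -⟩
        · rw [if_neg (Ne.symm hvne)] at h1; exact h1.symm
        · rw [if_neg (fun h => huw h.symm)] at h1; exact h1.symm
      have hab_ne : s(a,b) ≠ s(v,w) := hGab.2
      rcases hkey with ⟨rfl, rfl⟩ | ⟨rfl, rfl⟩
      · -- P : G.Walk v w
        have hCcyc : (Walk.cons hvw P.reverse).IsCycle := by
          rw [Walk.cons_isCycle_iff]
          exact ⟨hPp.reverse, by rw [Walk.edges_reverse]; simpa using hPvw⟩
        have hCmono : ∀ f ∈ (Walk.cons hvw P.reverse).edges, c f = j := by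
          intro f hf
          rcases List.mem_cons.mp (by rwa [Walk.edges_cons] at hf) with rfl | hf
          · rw [← hi₀, hji]
          · exact hPc _ (by rwa [Walk.edges_reverse, List.mem_reverse] at hf)
        have := hc _ _ hCcyc j hCmono
        rcases List.mem_cons.mp (by rwa [Walk.edges_cons] at this) with heq | hmem
        · exact absurd heq hab_ne
        · have : s(a,b) ∈ P.edges := by rwa [Walk.edges_reverse, List.mem_reverse] at hmem
          have := hPmem _ this
          rwa [Sym2.map_pair_eq] at this
      · -- P : G.Walk w v
        have hCcyc : (Walk.cons hvw P).IsCycle := by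
          rw [Walk.cons_isCycle_iff]
          exact ⟨hPp, by simpa using hPvw⟩
        have hCmono : ∀ f ∈ (Walk.cons hvw P).edges, c f = j := by
          intro f hf
          rcases List.mem_cons.mp (by rwa [Walk.edges_cons] at hf) with rfl | hf
          · rw [← hi₀, hji]
          · exact hPc _ hf
        have := hc _ _ hCcyc j hCmono
        rcases List.mem_cons.mp (by rwa [Walk.edges_cons] at this) with heq | hmem
        · exact absurd heq hab_ne
        · have := hPmem _ hmem
          rwa [Sym2.map_pair_eq] at this
    · obtain ⟨a', q, hq, hqvw, hqc, hqmem⟩ := extG_no_none p hp hnone hmono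
      have := hc _ q hq j hqc
      have := hqmem _ this
      rwa [Sym2.map_pair_eq] at this
  | some a, none, he' =>
    have hz : a = u ∨ a = v ∨ a = w := he'
    obtain ⟨c', hc'⟩ := hnew a hz
    refine ⟨c', ?_⟩
    intro β p hp j hmono
    rw [Sym2.eq_swap]
    exact hc' β p hp j hmono
  | none, some b, he' =>
    have hz : b = u ∨ b = v ∨ b = w := he'
    obtain ⟨c', hc'⟩ := hnew b hz
    exact ⟨c', hc'⟩

end ExtDel

section ExtCount

variable {V : Type*} [Fintype V] [DecidableEq V] {G : SimpleGraph V} {u v w : V}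

lemma extG_edgeSet :
    (extG G u v w).edgeSet = (Sym2.map some '' (G.edgeSet \ {s(v,w)})) ∪
      {s(none, some u), s(none, some v), s(none, some w)} := by
  ext e
  induction e with
  | _ x y =>
    match x, y with
    | some a, some b =>
      simp only [mem_edgeSet, extG_adj_some_some, Set.mem_union, Set.mem_image,
        Set.mem_diff, Set.mem_singleton_iff, Set.mem_insert_iff]
      constructor
      · rintro ⟨hab, hne⟩
        exact Or.inl ⟨s(a,b), ⟨hab, hne⟩, by rw [Sym2.map_pair_eq]⟩
      · rintro (⟨f, ⟨hf1, hf2⟩, hf3⟩ | h | h | h)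
        · induction f with
          | _ f1 f2 =>
            rw [Sym2.map_pair_eq] at hf3
            rcases Sym2.eq_iff.mp hf3 with ⟨h1, h2⟩ | ⟨h1, h2⟩
            · obtain rfl := Option.some_injective _ h1
              obtain rfl := Option.some_injective _ h2
              exact ⟨hf1, hf2⟩
            · obtain rfl := Option.some_injective _ h1
              obtain rfl := Option.some_injective _ h2
              exact ⟨hf1.symm, by rwa [Sym2.eq_swap]⟩
        all_goals (rcases Sym2.eq_iff.mp h with ⟨h1, h2⟩ | ⟨h1, h2⟩ <;> simp_all)
    | some a, none =>
      simp only [mem_edgeSet, Set.mem_union, Set.mem_image, Set.mem_diff,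
        Set.mem_singleton_iff, Set.mem_insert_iff]
      constructor
      · intro h
        rcases (h : a = u ∨ a = v ∨ a = w) with rfl | rfl | rfl
        · exact Or.inr (Or.inl (Sym2.eq_swap))
        · exact Or.inr (Or.inr (Or.inl (Sym2.eq_swap)))
        · exact Or.inr (Or.inr (Or.inr (Sym2.eq_swap)))
      · rintro (⟨f, _, hf3⟩ | h | h | h)
        · exfalso
          induction f with
          | _ f1 f2 =>
            rw [Sym2.map_pair_eq] at hf3
            rcases Sym2.eq_iff.mp hf3 with ⟨h1, h2⟩ | ⟨h1, h2⟩ <;> simp_all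
        · rcases Sym2.eq_iff.mp h with ⟨h1, h2⟩ | ⟨h1, h2⟩
          · exact absurd h1 (by simp)
          · exact Or.inl (Option.some_injective _ h1)
        · rcases Sym2.eq_iff.mp h with ⟨h1, h2⟩ | ⟨h1, h2⟩
          · exact absurd h1 (by simp)
          · exact Or.inr (Or.inl (Option.some_injective _ h1))
        · rcases Sym2.eq_iff.mp h with ⟨h1, h2⟩ | ⟨h1, h2⟩
          · exact absurd h1 (by simp)
          · exact Or.inr (Or.inr (Option.some_injective _ h1))
    | none, some b =>
      simp only [mem_edgeSet, Set.mem_union, Set.mem_image, Set.mem_diff,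
        Set.mem_singleton_iff, Set.mem_insert_iff]
      constructor
      · intro h
        rcases (h : b = u ∨ b = v ∨ b = w) with rfl | rfl | rfl
        · exact Or.inr (Or.inl rfl)
        · exact Or.inr (Or.inr (Or.inl rfl))
        · exact Or.inr (Or.inr (Or.inr rfl))
      · rintro (⟨f, _, hf3⟩ | h | h | h)
        · exfalso
          induction f with
          | _ f1 f2 =>
            rw [Sym2.map_pair_eq] at hf3
            rcases Sym2.eq_iff.mp hf3 with ⟨h1, h2⟩ | ⟨h1, h2⟩ <;> simp_all
        · rcases Sym2.eq_iff.mp h with ⟨h1, h2⟩ | ⟨h1, h2⟩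
          · exact Or.inl (Option.some_injective _ h2)
          · exact absurd h1 (by simp)
        · rcases Sym2.eq_iff.mp h with ⟨h1, h2⟩ | ⟨h1, h2⟩
          · exact Or.inr (Or.inl (Option.some_injective _ h2))
          · exact absurd h1 (by simp)
        · rcases Sym2.eq_iff.mp h with ⟨h1, h2⟩ | ⟨h1, h2⟩
          · exact Or.inr (Or.inr (Option.some_injective _ h2))
          · exact absurd h1 (by simp)
    | none, none =>
      simp only [mem_edgeSet, Set.mem_union, Set.mem_image, Set.mem_diff,
        Set.mem_singleton_iff, Set.mem_insert_iff]
      constructor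
      · intro h
        exact h.elim
      · rintro (⟨f, _, hf3⟩ | h | h | h)
        · exfalso
          induction f with
          | _ f1 f2 =>
            rw [Sym2.map_pair_eq] at hf3
            rcases Sym2.eq_iff.mp hf3 with ⟨h1, h2⟩ | ⟨h1, h2⟩ <;> simp_all
        all_goals (rcases Sym2.eq_iff.mp h with ⟨h1, h2⟩ | ⟨h1, h2⟩ <;> simp_all)

end ExtCount

section ExtCount2

variable {V : Type*} [Fintype V] [DecidableEq V] {G : SimpleGraph V} {u v w : V}

lemma extG_ncard (huv : G.Adj u v) (hvw : G.Adj v w) (huw : u ≠ w)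
    (h : G.edgeSet.ncard + 1 = 2 * Fintype.card V) :
    (extG G u v w).edgeSet.ncard + 1 = 2 * Fintype.card (Option V) := by
  classical
  have hvne : u ≠ v := huv.ne
  have hwne : v ≠ w := hvw.ne
  have hinj : Function.Injective (Sym2.map (some : V → Option V)) :=
    Sym2.map.injective (Option.some_injective V)
  rw [extG_edgeSet]
  have hdisj : Disjoint (Sym2.map some '' (G.edgeSet \ {s(v,w)}))
      ({s(none, some u), s(none, some v), s(none, some w)} : Set (Sym2 (Option V))) := by
    rw [Set.disjoint_right]
    rintro e (rfl | rfl | rfl) ⟨f, _, hf⟩ <;>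
      · induction f with
        | _ f1 f2 =>
          rw [Sym2.map_pair_eq] at hf
          rcases Sym2.eq_iff.mp hf with ⟨h1, h2⟩ | ⟨h1, h2⟩ <;> simp_all
  rw [Set.ncard_union_eq hdisj (Set.toFinite _) (Set.toFinite _)]
  have h1 : (Sym2.map some '' (G.edgeSet \ {s(v,w)})).ncard = G.edgeSet.ncard - 1 := by
    rw [Set.ncard_image_of_injective _ hinj,
      Set.ncard_diff_singleton_of_mem (by exact hvw)]
  have hne1 : (s(none, some u) : Sym2 (Option V)) ∉
      ({s(none, some v), s(none, some w)} : Set (Sym2 (Option V))) := by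
    simp only [Set.mem_insert_iff, Set.mem_singleton_iff]
    rintro (h | h) <;>
      (rcases Sym2.eq_iff.mp h with ⟨ha, hb⟩ | ⟨ha, hb⟩ <;> simp_all)
  have hne2 : (s(none, some v) : Sym2 (Option V)) ∉
      ({s(none, some w)} : Set (Sym2 (Option V))) := by
    simp only [Set.mem_singleton_iff]
    intro h
    rcases Sym2.eq_iff.mp h with ⟨ha, hb⟩ | ⟨ha, hb⟩ <;> simp_all
  have h2 : ({s(none, some u), s(none, some v), s(none, some w)} :
      Set (Sym2 (Option V))).ncard = 3 := by
    rw [Set.ncard_insert_of_notMem hne1 (Set.toFinite _),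
      Set.ncard_insert_of_notMem hne2 (Set.toFinite _), Set.ncard_singleton]
  have hpos : 0 < G.edgeSet.ncard := (Set.ncard_pos (Set.toFinite _)).mpr ⟨s(v,w), hvw⟩
  rw [h1, h2, Fintype.card_option]
  omega

lemma extG_nondeg (hvw : G.Adj v w) (hdeg : ∀ x, ∃ y, G.Adj x y) :
    ∀ x : Option V, ∃ y, (extG G u v w).Adj x y := by
  rintro (_ | a)
  · exact ⟨some u, Or.inl rfl⟩
  · obtain ⟨y, hy⟩ := hdeg a
    by_cases hne : s(a, y) = s(v, w)
    · rcases Sym2.eq_iff.mp hne with ⟨rfl, rfl⟩ | ⟨rfl, rfl⟩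
      · exact ⟨none, Or.inr (Or.inl rfl)⟩
      · exact ⟨none, Or.inr (Or.inr rfl)⟩
    · exact ⟨some y, hy, hne⟩

end ExtCount2

section Base

def Gbase : SimpleGraph (Fin 5) := SimpleGraph.fromRel (fun a b =>
  (a,b) ∈ [((0:Fin 5),(1:Fin 5)),(0,2),(0,3),(0,4),(1,2),(1,3),(1,4),(2,3),(2,4)])

instance : DecidableRel Gbase.Adj := decAdjFromRel _

def classG {V : Type*} [DecidableEq V] (G : SimpleGraph V) (e : Sym2 V) (c : Sym2 V → Fin 2)
    (i : Fin 2) : SimpleGraph V :=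
  SimpleGraph.fromRel (fun a b => G.Adj a b ∧ s(a,b) ≠ e ∧ c s(a,b) = i)

def mkc (l : List (Sym2 (Fin 5))) : Sym2 (Fin 5) → Fin 2 := fun f => if f ∈ l then 1 else 0

instance (l : List (Sym2 (Fin 5))) (e : Sym2 (Fin 5)) (i : Fin 2) :
    DecidableRel (classG Gbase e (mkc l) i).Adj := decAdjFromRel _

lemma del_helper {V : Type*} [DecidableEq V] (G : SimpleGraph V) (e : Sym2 V)
    (c : Sym2 V → Fin 2) (h0 : (classG G e c 0).IsAcyclic) (h1 : (classG G e c 1).IsAcyclic) :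
    ∀ (a : V) (p : G.Walk a a), p.IsCycle → ∀ i : Fin 2,
      (∀ f ∈ p.edges, c f = i) → e ∈ p.edges := by
  intro a p hp i hmono
  by_contra hmem
  have hedges : ∀ f ∈ p.edges, f ∈ (classG G e c i).edgeSet := by
    intro f hf
    have hfG : f ∈ G.edgeSet := p.edges_subset_edgeSet hf
    have hfe : f ≠ e := fun h => hmem (h ▸ hf)
    have hfc : c f = i := hmono f hf
    induction f with
    | _ x y =>
      rw [mem_edgeSet, classG, fromRel_adj]
      exact ⟨(hfG : G.Adj x y).ne, Or.inl ⟨hfG, hfe, hfc⟩⟩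
  have hc := hp.transfer hedges
  have hi : i = 0 ∨ i = 1 := by
    rcases i with ⟨(_|_|n), hn⟩
    · exact Or.inl rfl
    · exact Or.inr rfl
    · omega
  rcases hi with rfl | rfl
  · exact h0 _ hc
  · exact h1 _ hc

set_option maxHeartbeats 12000000 in
lemma Gbase_del : Del Gbase := by
  intro e he
  induction e with
  | _ x y =>
    fin_cases x <;> fin_cases y
    · exact absurd he (by decide)
    · exact ⟨mkc [s(0,2), s(0,3), s(1,2), s(1,4)], del_helper _ _ _ (by decide) (by decide)⟩
    · exact ⟨mkc [s(0,1), s(0,3), s(1,2), s(1,4)], del_helper _ _ _ (by decide) (by decide)⟩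
    · exact ⟨mkc [s(0,1), s(0,2), s(1,3), s(1,4)], del_helper _ _ _ (by decide) (by decide)⟩
    · exact ⟨mkc [s(0,1), s(0,2), s(1,3), s(1,4)], del_helper _ _ _ (by decide) (by decide)⟩
    · rw [Sym2.eq_swap]; exact ⟨mkc [s(0,2), s(0,3), s(1,2), s(1,4)], del_helper _ _ _ (by decide) (by decide)⟩
    · exact absurd he (by decide)
    · exact ⟨mkc [s(0,1), s(0,2), s(0,3), s(1,4)], del_helper _ _ _ (by decide) (by decide)⟩
    · exact ⟨mkc [s(0,1), s(0,2), s(0,3), s(1,4)], del_helper _ _ _ (by decide) (by decide)⟩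
    · exact ⟨mkc [s(0,1), s(0,2), s(0,4), s(1,3)], del_helper _ _ _ (by decide) (by decide)⟩
    · rw [Sym2.eq_swap]; exact ⟨mkc [s(0,1), s(0,3), s(1,2), s(1,4)], del_helper _ _ _ (by decide) (by decide)⟩
    · rw [Sym2.eq_swap]; exact ⟨mkc [s(0,1), s(0,2), s(0,3), s(1,4)], del_helper _ _ _ (by decide) (by decide)⟩
    · exact absurd he (by decide)
    · exact ⟨mkc [s(0,1), s(0,2), s(0,3), s(1,4)], del_helper _ _ _ (by decide) (by decide)⟩
    · exact ⟨mkc [s(0,1), s(0,2), s(0,4), s(1,3)], del_helper _ _ _ (by decide) (by decide)⟩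
    · rw [Sym2.eq_swap]; exact ⟨mkc [s(0,1), s(0,2), s(1,3), s(1,4)], del_helper _ _ _ (by decide) (by decide)⟩
    · rw [Sym2.eq_swap]; exact ⟨mkc [s(0,1), s(0,2), s(0,3), s(1,4)], del_helper _ _ _ (by decide) (by decide)⟩
    · rw [Sym2.eq_swap]; exact ⟨mkc [s(0,1), s(0,2), s(0,3), s(1,4)], del_helper _ _ _ (by decide) (by decide)⟩
    · exact absurd he (by decide)
    · exact absurd he (by decide)
    · rw [Sym2.eq_swap]; exact ⟨mkc [s(0,1), s(0,2), s(1,3), s(1,4)], del_helper _ _ _ (by decide) (by decide)⟩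
    · rw [Sym2.eq_swap]; exact ⟨mkc [s(0,1), s(0,2), s(0,4), s(1,3)], del_helper _ _ _ (by decide) (by decide)⟩
    · rw [Sym2.eq_swap]; exact ⟨mkc [s(0,1), s(0,2), s(0,4), s(1,3)], del_helper _ _ _ (by decide) (by decide)⟩
    · exact absurd he (by decide)
    · exact absurd he (by decide)

lemma Gbase_count : Gbase.edgeSet.ncard + 1 = 2 * Fintype.card (Fin 5) := by
  rw [Set.ncard_eq_toFinset_card']
  decide

lemma Gbase_nondeg : ∀ x : Fin 5, ∃ y, Gbase.Adj x y := by decide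

lemma Gbase_path : Gbase.Adj 0 1 ∧ Gbase.Adj 1 2 ∧ (0:Fin 5) ≠ 2 := by decide

end Base

section Main

lemma main_ind (k : ℕ) : ∃ (V : Type) (i1 : Fintype V) (_ : DecidableEq V)
    (G : SimpleGraph V) (u v w : V),
    G.Adj u v ∧ G.Adj v w ∧ u ≠ w ∧ (∀ x, ∃ y, G.Adj x y) ∧
    (G.edgeSet.ncard + 1 = 2 * @Fintype.card V i1) ∧ Del G ∧ @Fintype.card V i1 = k + 5 := by
  induction k with
  | zero =>
    exact ⟨Fin 5, inferInstance, inferInstance, Gbase, 0, 1, 2, Gbase_path.1, Gbase_path.2.1,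
      Gbase_path.2.2, Gbase_nondeg, Gbase_count, Gbase_del, rfl⟩
  | succ n ih =>
    obtain ⟨V, i1, i2, G, u, v, w, huv, hvw, huw, hdeg, hcount, hdel, hcard⟩ := ih
    letI := i1
    letI := i2
    refine ⟨Option V, inferInstance, inferInstance, extG G u v w, some u, none, some v,
      Or.inl rfl, Or.inr (Or.inl rfl), fun h => huv.ne (Option.some_injective _ h),
      extG_nondeg hvw hdeg, extG_ncard huv hvw huw hcount, extG_del huv hvw huw hdel, ?_⟩
    rw [Fintype.card_option, hcard]

/-- there are infinitely many pairwise non-isomorphic minimal 2-Ramsey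
graphs for cyclicity: for every `n` there is one on more than `n` vertices. -/
theorem stmt17 (n : ℕ) :
    ∃ (V : Type) (inst : Fintype V) (G : SimpleGraph V),
      IsMinRamseyCyc 2 G ∧ n < @Fintype.card V inst := by
  obtain ⟨V, i1, i2, G, u, v, w, huv, hvw, huw, hdeg, hcount, hdel, hcard⟩ := main_ind n
  letI := i1
  letI := i2
  exact ⟨V, i1, G, ⟨ramsey_of_count G hcount, not_ramsey_of_del hdeg hdel⟩, by omega⟩

end Main
end

section
/- A forest of cycles on n non-isolated vertices has at least n and at most (3/2)(n - 1) edges. -/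
open SimpleGraph




lemma head_ne_of_rev {α : Type*} {l t₁ t₂ : List α} {e : α}
    (h₁ : l = e :: t₁) (h₂ : l.reverse = e :: t₂) (hn : l.Nodup) (hl : 3 ≤ l.length) :
    False := by
  subst h₁
  have h3 : e :: t₁ = t₂.reverse ++ [e] := by
    have := congrArg List.reverse h₂
    simpa using this
  have he : e ∈ t₁ := by
    rcases hrev : t₂.reverse with _ | ⟨a, s⟩
    · rw [hrev] at h3
      simp at h3
      subst h3
      simp at hl
    · rw [hrev] at h3
      simp only [List.cons_append, List.cons.injEq] at h3
      rw [h3.2]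
      simp
  exact (List.nodup_cons.1 hn).1 he

lemma two_nbrs {V : Type*} [DecidableEq V] {G : SimpleGraph V}
    (hcyc : ∀ e ∈ G.edgeSet, ∃ (v : V) (w : G.Walk v v), w.IsCycle ∧ e ∈ w.edges)
    {v u : V} (hadj : G.Adj v u) :
    ∃ x y, x ≠ y ∧ G.Adj v x ∧ G.Adj v y := by
  obtain ⟨a, w, hwc, hwe⟩ := hcyc s(v, u) (G.mem_edgeSet.2 hadj)
  have hv : v ∈ w.support := w.fst_mem_support_of_mem_edges hwe
  set c : G.Walk v v := w.rotate v hv with hc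
  have hcc : c.IsCycle := hwc.rotate hv
  have hL : 3 ≤ c.length := hcc.three_le_length
  have hnil : ¬ c.Nil := by rw [Walk.not_nil_iff_lt_length]; omega
  have hnilr : ¬ c.reverse.Nil := by rw [Walk.not_nil_iff_lt_length]; simpa using (by omega : 0 < c.length)
  set x := c.getVert 1 with hx
  set y := c.reverse.getVert 1 with hy
  have hvx : G.Adj v x := c.adj_snd hnil
  have hvy : G.Adj v y := c.reverse.adj_snd hnilr
  refine ⟨x, y, ?_, hvx, hvy⟩
  intro hxy
  have hceq : Walk.cons (c.adj_snd hnil) c.tail = c := c.cons_tail_eq hnil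
  have hceqr : Walk.cons (c.reverse.adj_snd hnilr) c.reverse.tail = c.reverse :=
    c.reverse.cons_tail_eq hnilr
  have hedges : c.edges = s(v, x) :: c.tail.edges := by
    nth_rewrite 1 [← hceq]; rw [Walk.edges_cons]
  have hedgesr : c.edges.reverse = s(v, y) :: c.reverse.tail.edges := by
    rw [← Walk.edges_reverse]
    nth_rewrite 1 [← hceqr]; rw [Walk.edges_cons]
  rw [← hxy] at hedgesr
  exact head_ne_of_rev hedges hedgesr hcc.isCircuit.isTrail.edges_nodup
    (by rw [Walk.length_edges]; exact hL)



lemma exists_leaf {V : Type*} [Fintype V] {G : SimpleGraph V} (hac : G.IsAcyclic)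
    (hne : G.edgeSet.Nonempty) :
    ∃ u x, G.Adj u x ∧ ∀ w, G.Adj u w → w = x := by
  classical
  obtain ⟨e, he⟩ := hne
  induction e with
  | _ a b =>
  rw [mem_edgeSet] at he
  haveI : Nonempty V := ⟨a⟩
  set P : ℕ → Prop := fun n => ∃ (u v : V) (p : G.Walk u v), p.IsPath ∧ p.length = n with hP
  have hP1 : P 1 := by
    refine ⟨a, b, Walk.cons he Walk.nil, ?_, by simp⟩
    rw [Walk.cons_isPath_iff]
    exact ⟨Walk.IsPath.nil, by simp [G.ne_of_adj he]⟩
  have hcard : 1 ≤ Fintype.card V := Fintype.card_pos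
  set N := Nat.findGreatest P (Fintype.card V) with hN
  have hN1 : 1 ≤ N := Nat.le_findGreatest hcard hP1
  obtain ⟨u, v, p, hp, hlen⟩ : P N := Nat.findGreatest_spec hcard hP1
  have hnil : ¬ p.Nil := by rw [Walk.not_nil_iff_lt_length]; omega
  refine ⟨u, p.getVert 1, p.adj_snd hnil, ?_⟩
  intro w hw
  by_contra hwx
  by_cases hws : w ∈ p.support
  · -- second path u → w gives x = w by path uniqueness
    have huw : u ≠ w := G.ne_of_adj hw
    have hq : (p.takeUntil w hws).IsPath := hp.takeUntil hws
    have hs : (Walk.cons hw (Walk.nil : G.Walk w w)).IsPath := by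
      rw [Walk.cons_isPath_iff]
      exact ⟨Walk.IsPath.nil, by simp [huw]⟩
    have := hac.path_unique ⟨p.takeUntil w hws, hq⟩ ⟨Walk.cons hw Walk.nil, hs⟩
    have heq : p.takeUntil w hws = Walk.cons hw Walk.nil := congrArg Subtype.val this
    -- p = (takeUntil) ++ (dropUntil); compute getVert 1
    have hspec := p.take_spec hws
    have : p.getVert 1 = w := by
      rw [← hspec, Walk.getVert_append, heq]
      simp
    exact hwx (this ▸ rfl)
  · -- extend the path: contradiction with maximality
    have hext : (Walk.cons (hw.symm) p).IsPath := by
      rw [Walk.cons_isPath_iff]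
      exact ⟨hp, hws⟩
    have hlt : (Walk.cons (hw.symm) p).length < Fintype.card V := hext.length_lt
    have hlen' : (Walk.cons (hw.symm) p).length = N + 1 := by simp [hlen]
    have hng : ¬ P (N + 1) :=
      Nat.findGreatest_is_greatest (P := P) (n := Fintype.card V) (by rw [← hN]; omega) (by omega)
    exact hng ⟨w, v, Walk.cons hw.symm p, hext, hlen'⟩

lemma forest_bound {V : Type*} [Fintype V] :
    ∀ (m : ℕ) (G : SimpleGraph V), G.edgeSet.ncard = m → G.IsAcyclic →
      G.edgeSet.Nonempty → m + 1 ≤ {v : V | ∃ u, G.Adj v u}.ncard := by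
  intro m
  induction m using Nat.strong_induction_on with
  | _ m ih =>
  intro G hm hac hne
  classical
  obtain ⟨u, x, hux, huniq⟩ := exists_leaf hac hne
  have hm1 : 1 ≤ m := by rw [← hm]; exact (Set.ncard_pos (Set.toFinite _)).mpr hne
  set G' := G.deleteEdges {s(u, x)} with hG'
  have hle : G' ≤ G := G.deleteEdges_le _
  have hE' : G'.edgeSet = G.edgeSet \ {s(u, x)} := G.edgeSet_deleteEdges _
  have hemem : s(u, x) ∈ G.edgeSet := G.mem_edgeSet.2 hux
  have hm' : G'.edgeSet.ncard = m - 1 := by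
    rw [hE', Set.ncard_diff_singleton_of_mem hemem, hm]
  have hac' : G'.IsAcyclic := by
    intro v c hc
    have hsub : ∀ e ∈ c.edges, e ∈ G.edgeSet := fun e hed =>
      (edgeSet_mono hle) (c.edges_subset_edgeSet hed)
    exact hac (c.transfer G hsub) (hc.transfer hsub)
  have husupp : u ∈ {v : V | ∃ w, G.Adj v w} := ⟨x, hux⟩
  have hxsupp : x ∈ {v : V | ∃ w, G.Adj v w} := ⟨u, hux.symm⟩
  have hunotin : u ∉ {v : V | ∃ w, G'.Adj v w} := by
    rintro ⟨w, hw⟩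
    rw [hG', deleteEdges_adj] at hw
    have := huniq w hw.1
    subst this
    exact hw.2 rfl
  have hsupple : {v : V | ∃ w, G'.Adj v w} ⊆ {v : V | ∃ w, G.Adj v w} := by
    rintro v ⟨w, hw⟩
    exact ⟨w, hle hw⟩
  have hkeep : ∀ v, v ≠ u → v ≠ x → v ∈ {v : V | ∃ w, G.Adj v w} →
      v ∈ {v : V | ∃ w, G'.Adj v w} := by
    rintro v hvu hvx ⟨w, hw⟩
    refine ⟨w, ?_⟩
    rw [hG', deleteEdges_adj]
    refine ⟨hw, ?_⟩
    intro hvw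
    simp only [Set.mem_singleton_iff, Sym2.eq_iff] at hvw
    rcases hvw with ⟨rfl, rfl⟩ | ⟨rfl, rfl⟩
    · exact hvu rfl
    · exact hvx rfl
  have hn1 : 1 ≤ {v : V | ∃ w, G.Adj v w}.ncard :=
    (Set.ncard_pos (Set.toFinite _)).mpr ⟨u, husupp⟩
  by_cases hx : x ∈ {v : V | ∃ w, G'.Adj v w}
  · -- Case A : the other endpoint keeps an edge
    have hne' : G'.edgeSet.Nonempty := by
      obtain ⟨w, hw⟩ := hx
      exact ⟨s(x, w), G'.mem_edgeSet.2 hw⟩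
    have hsub : {v : V | ∃ w, G'.Adj v w} ⊆ {v : V | ∃ w, G.Adj v w} \ {u} := by
      intro v hv
      refine ⟨hsupple hv, ?_⟩
      simp only [Set.mem_singleton_iff]
      rintro rfl
      exact hunotin hv
    have hcard : {v : V | ∃ w, G'.Adj v w}.ncard ≤ {v : V | ∃ w, G.Adj v w}.ncard - 1 := by
      calc {v : V | ∃ w, G'.Adj v w}.ncard
          ≤ ({v : V | ∃ w, G.Adj v w} \ {u}).ncard :=
            Set.ncard_le_ncard hsub (Set.toFinite _)
        _ = {v : V | ∃ w, G.Adj v w}.ncard - 1 :=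
            Set.ncard_diff_singleton_of_mem husupp
    have hIH := ih (m - 1) (by omega) G' hm' hac' hne'
    omega
  · -- Case B : the other endpoint becomes isolated
    have hux' : u ≠ x := G.ne_of_adj hux
    by_cases hne' : G'.edgeSet.Nonempty
    · have hsub : {v : V | ∃ w, G'.Adj v w} ⊆ ({v : V | ∃ w, G.Adj v w} \ {u}) \ {x} := by
        intro v hv
        refine ⟨⟨hsupple hv, ?_⟩, ?_⟩ <;> simp only [Set.mem_singleton_iff]
        · rintro rfl; exact hunotin hv
        · rintro rfl; exact hx hv
      have hxmem : x ∈ {v : V | ∃ w, G.Adj v w} \ {u} := by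
        refine ⟨hxsupp, ?_⟩
        simp [Ne.symm hux']
      have hcard : {v : V | ∃ w, G'.Adj v w}.ncard ≤
          {v : V | ∃ w, G.Adj v w}.ncard - 2 := by
        calc {v : V | ∃ w, G'.Adj v w}.ncard
            ≤ (({v : V | ∃ w, G.Adj v w} \ {u}) \ {x}).ncard :=
              Set.ncard_le_ncard hsub (Set.toFinite _)
          _ = ({v : V | ∃ w, G.Adj v w} \ {u}).ncard - 1 :=
              Set.ncard_diff_singleton_of_mem hxmem
          _ = {v : V | ∃ w, G.Adj v w}.ncard - 1 - 1 := by
              rw [Set.ncard_diff_singleton_of_mem husupp]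
      have hIH := ih (m - 1) (by omega) G' hm' hac' hne'
      have hn2 : 2 ≤ {v : V | ∃ w, G.Adj v w}.ncard := by
        rw [← Set.ncard_pair hux']
        exact Set.ncard_le_ncard (by
          intro z hz
          rcases hz with rfl | hz
          · exact husupp
          · simp only [Set.mem_singleton_iff] at hz; subst hz; exact hxsupp) (Set.toFinite _)
      omega
    · -- G' has no edges : m = 1
      have hmeq : m = 1 := by
        have : G.edgeSet ⊆ {s(u, x)} := by
          intro e hee
          by_contra hnot
          exact hne' ⟨e, by rw [hE']; exact ⟨hee, hnot⟩⟩
        have h2 := Set.ncard_le_ncard this (Set.toFinite _)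
        rw [hm, Set.ncard_singleton] at h2
        omega
      have hn2 : 2 ≤ {v : V | ∃ w, G.Adj v w}.ncard := by
        rw [← Set.ncard_pair (G.ne_of_adj hux)]
        exact Set.ncard_le_ncard (by
          intro z hz
          rcases hz with rfl | hz
          · exact husupp
          · simp only [Set.mem_singleton_iff] at hz; subst hz; exact hxsupp) (Set.toFinite _)
      omega

/-- `G` is a forest of cycles: it has an edge, every edge lies on a cycle, and any
two cycles through a common edge have the same edge set (i.e. every edge lies on
exactly one cycle). This characterizes the graphs obtained from a single cycle by
recursively adjoining further cycles sharing at most one vertex with the part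
already built. -/
def IsForestOfCycles {V : Type*} (G : SimpleGraph V) : Prop :=
  G.edgeSet.Nonempty ∧
  (∀ e ∈ G.edgeSet, ∃ (v : V) (w : G.Walk v v), w.IsCycle ∧ e ∈ w.edges) ∧
  ∀ e ∈ G.edgeSet, ∀ (v₁ v₂ : V) (w₁ : G.Walk v₁ v₁) (w₂ : G.Walk v₂ v₂),
    w₁.IsCycle → w₂.IsCycle → e ∈ w₁.edges → e ∈ w₂.edges →
    ∀ f : Sym2 V, f ∈ w₁.edges ↔ f ∈ w₂.edges

/-- a forest of cycles with `n` non-isolated vertices has at least `n`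
and at most `(3/2)(n - 1)` edges. -/
theorem stmt18 {V : Type*} [Fintype V] (G : SimpleGraph V)
    (h : IsForestOfCycles G) :
    {v : V | ∃ u, G.Adj v u}.ncard ≤ G.edgeSet.ncard ∧
    2 * G.edgeSet.ncard ≤ 3 * ({v : V | ∃ u, G.Adj v u}.ncard - 1) := by
  classical
  obtain ⟨hne, hcyc, huniq⟩ := h
  set n := {v : V | ∃ u, G.Adj v u}.ncard with hn
  set m := G.edgeSet.ncard with hmdef
  -- Part 1 : n ≤ m via minimum degree 2
  have hm_card : m = G.edgeFinset.card := by
    rw [hmdef, Set.ncard_eq_toFinset_card', Set.toFinset_card, ← edgeFinset_card]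
  have hn_card : n = ({v : V | ∃ u, G.Adj v u}.toFinset).card := by
    rw [hn, Set.ncard_eq_toFinset_card']
  have hdeg : ∀ v ∈ {v : V | ∃ u, G.Adj v u}.toFinset, 2 ≤ G.degree v := by
    intro v hv
    rw [Set.mem_toFinset] at hv
    obtain ⟨u, hadj⟩ := hv
    obtain ⟨x, y, hxy, hvx, hvy⟩ := two_nbrs hcyc hadj
    rw [← card_neighborFinset_eq_degree]
    exact Finset.one_lt_card.mpr
      ⟨x, (mem_neighborFinset G v x).mpr hvx, y, (mem_neighborFinset G v y).mpr hvy, hxy⟩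
  have hpart1 : n ≤ m := by
    have hsum : 2 * ({v : V | ∃ u, G.Adj v u}.toFinset).card ≤ 2 * G.edgeFinset.card := by
      rw [← G.sum_degrees_eq_twice_card_edges]
      calc 2 * ({v : V | ∃ u, G.Adj v u}.toFinset).card
          = ∑ v ∈ {v : V | ∃ u, G.Adj v u}.toFinset, 2 := by
            rw [Finset.sum_const, smul_eq_mul, mul_comm]
        _ ≤ ∑ v ∈ {v : V | ∃ u, G.Adj v u}.toFinset, G.degree v :=
            Finset.sum_le_sum hdeg
        _ ≤ ∑ v, G.degree v :=
            Finset.sum_le_sum_of_subset (Finset.subset_univ _)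
    rw [hm_card, hn_card]
    omega
  refine ⟨hpart1, ?_⟩
  -- Part 2 : set up edge classes
  have hclsaux : ∀ e, e ∈ G.edgeSet → ∃ (v : V) (w : G.Walk v v), w.IsCycle ∧ e ∈ w.edges :=
    hcyc
  choose vx wx hwc hwe using hclsaux
  set cls : Sym2 V → Finset (Sym2 V) := fun e =>
    if he : e ∈ G.edgeSet then (wx e he).edges.toFinset else ∅ with hcls
  have hclsdef : ∀ e (he : e ∈ G.edgeSet), cls e = (wx e he).edges.toFinset := by
    intro e he
    simp [hcls, he]
  have c1 : ∀ e (he : e ∈ G.edgeSet), e ∈ cls e := by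
    intro e he
    rw [hclsdef e he, List.mem_toFinset]
    exact hwe e he
  have c2 : ∀ e (he : e ∈ G.edgeSet), (cls e : Set (Sym2 V)) ⊆ G.edgeSet := by
    intro e he f hf
    rw [Finset.mem_coe, hclsdef e he, List.mem_toFinset] at hf
    exact (wx e he).edges_subset_edgeSet hf
  have c3 : ∀ e (he : e ∈ G.edgeSet), 3 ≤ (cls e).card := by
    intro e he
    rw [hclsdef e he, List.toFinset_card_of_nodup (hwc e he).isCircuit.isTrail.edges_nodup,
      Walk.length_edges]
    exact (hwc e he).three_le_length
  have c4 : ∀ e (he : e ∈ G.edgeSet) f, f ∈ cls e → f ∈ G.edgeSet ∧ cls f = cls e := by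
    intro e he f hf
    rw [hclsdef e he, List.mem_toFinset] at hf
    have hfe : f ∈ G.edgeSet := (wx e he).edges_subset_edgeSet hf
    refine ⟨hfe, ?_⟩
    have := huniq f hfe _ _ (wx f hfe) (wx e he) (hwc f hfe) (hwc e he) (hwe f hfe) hf
    rw [hclsdef f hfe, hclsdef e he]
    ext g
    rw [List.mem_toFinset, List.mem_toFinset]
    exact this g
  set Q : Finset (Finset (Sym2 V)) := G.edgeFinset.image cls with hQ
  have hQmem : ∀ P ∈ Q, ∃ e, e ∈ G.edgeSet ∧ cls e = P := by
    intro P hP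
    rw [hQ, Finset.mem_image] at hP
    obtain ⟨e, he, hPe⟩ := hP
    exact ⟨e, (mem_edgeFinset).mp he, hPe⟩
  set k := Q.card with hk
  obtain ⟨e₀, he₀⟩ := hne
  set rep : Finset (Sym2 V) → Sym2 V := fun P => if h : P.Nonempty then h.choose else e₀
    with hrep
  have r1 : ∀ P ∈ Q, rep P ∈ P := by
    intro P hP
    obtain ⟨e, he, hPe⟩ := hQmem P hP
    have hPne : P.Nonempty := ⟨e, hPe ▸ c1 e he⟩
    rw [hrep]
    simp only [dif_pos hPne]
    exact hPne.choose_spec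
  set R : Finset (Sym2 V) := Q.image rep with hR
  have r2 : (R : Set (Sym2 V)) ⊆ G.edgeSet := by
    intro f hf
    rw [Finset.mem_coe, hR, Finset.mem_image] at hf
    obtain ⟨P, hP, hPf⟩ := hf
    obtain ⟨e, he, hPe⟩ := hQmem P hP
    subst hPf
    have hmem := r1 P hP
    apply c2 e he
    rw [hPe]
    exact Finset.mem_coe.mpr hmem
  have r3 : R.card = k := by
    rw [hR, hk]
    apply Finset.card_image_of_injOn
    intro P₁ h₁ P₂ h₂ hrepeq
    have hf₁ := r1 P₁ h₁
    have hf₂ := r1 P₂ h₂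
    obtain ⟨a₁, ha₁, hPa₁⟩ := hQmem P₁ h₁
    obtain ⟨a₂, ha₂, hPa₂⟩ := hQmem P₂ h₂
    have hcls₁ := (c4 a₁ ha₁ (rep P₁) (hPa₁ ▸ hf₁)).2
    have hcls₂ := (c4 a₂ ha₂ (rep P₂) (hPa₂ ▸ hf₂)).2
    rw [hPa₁] at hcls₁
    rw [hPa₂] at hcls₂
    rw [← hcls₁, ← hcls₂, hrepeq]
  -- partition: edgeFinset = Q.biUnion (fun P => P), pieces pairwise disjoint
  have hdisj : ∀ P₁ ∈ Q, ∀ P₂ ∈ Q, P₁ ≠ P₂ → Disjoint P₁ P₂ := by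
    intro P₁ h₁ P₂ h₂ hne12
    rw [Finset.disjoint_left]
    intro f hf₁ hf₂
    obtain ⟨a₁, ha₁, hPa₁⟩ := hQmem P₁ h₁
    obtain ⟨a₂, ha₂, hPa₂⟩ := hQmem P₂ h₂
    have h₁' := (c4 a₁ ha₁ f (hPa₁ ▸ hf₁)).2
    have h₂' := (c4 a₂ ha₂ f (hPa₂ ▸ hf₂)).2
    rw [hPa₁] at h₁'
    rw [hPa₂] at h₂'
    exact hne12 (h₁'.symm.trans h₂')
  have hpartition : G.edgeFinset = Q.biUnion (fun P => P) := by
    ext f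
    simp only [Finset.mem_biUnion]
    constructor
    · intro hf
      have hf' := (mem_edgeFinset).mp hf
      exact ⟨cls f, Finset.mem_image_of_mem cls hf, c1 f hf'⟩
    · rintro ⟨P, hP, hfP⟩
      obtain ⟨e, he, hPe⟩ := hQmem P hP
      exact mem_edgeFinset.mpr (c4 e he f (hPe ▸ hfP)).1
  have h3k : 3 * k ≤ m := by
    rw [hm_card, hpartition, Finset.card_biUnion hdisj]
    calc 3 * k = ∑ _P ∈ Q, 3 := by rw [Finset.sum_const, smul_eq_mul, mul_comm, hk]
      _ ≤ ∑ P ∈ Q, P.card := by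
          apply Finset.sum_le_sum
          intro P hP
          obtain ⟨e, he, hPe⟩ := hQmem P hP
          exact hPe ▸ c3 e he
  have hk1 : 1 ≤ k := by
    rw [hk]
    refine Finset.card_pos.mpr ⟨cls e₀, ?_⟩
    exact Finset.mem_image_of_mem cls (mem_edgeFinset.mpr he₀)
  -- the forest obtained by deleting one edge per cycle
  set T := G.deleteEdges ↑R with hT
  have hTE : T.edgeSet = G.edgeSet \ ↑R := G.edgeSet_deleteEdges _
  have hTm : T.edgeSet.ncard = m - k := by
    rw [hTE, Set.ncard_diff r2 (Set.toFinite _), Set.ncard_coe_finset, r3, hmdef]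
  have hTac : T.IsAcyclic := by
    intro v c hc
    have hsub : ∀ f ∈ c.edges, f ∈ G.edgeSet := fun f hf =>
      (edgeSet_mono (G.deleteEdges_le _)) (c.edges_subset_edgeSet hf)
    set c' := c.transfer G hsub with hc'def
    have hc'c : c'.IsCycle := hc.transfer hsub
    have hc'edges : c'.edges = c.edges := c.edges_transfer hsub
    -- first edge of c
    have hlen : 3 ≤ c.length := hc.three_le_length
    have hene : c.edges ≠ [] := by
      intro h0
      have := c.length_edges
      rw [h0] at this
      simp at this
      omega
    set e := c.edges.head hene with he_def
    have heet : e ∈ c.edges := List.head_mem hene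
    have heT : e ∈ T.edgeSet := c.edges_subset_edgeSet heet
    have heG : e ∈ G.edgeSet := hsub e heet
    have heR : e ∉ (R : Set (Sym2 V)) := by
      rw [hTE] at heT
      exact heT.2
    -- the representative of e's class lies on c, hence survives in T : contradiction
    have hQe : cls e ∈ Q := Finset.mem_image_of_mem cls (mem_edgeFinset.mpr heG)
    have hrepe := r1 (cls e) hQe
    have hrepR : rep (cls e) ∈ R := Finset.mem_image_of_mem rep hQe
    have hrepw : rep (cls e) ∈ (wx e heG).edges := by
      rw [← List.mem_toFinset, ← hclsdef e heG]
      exact hrepe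
    have hiff := huniq e heG _ _ (wx e heG) c' (hwc e heG) hc'c (hwe e heG)
      (by rw [hc'edges]; exact heet) (rep (cls e))
    have : rep (cls e) ∈ c.edges := by rw [← hc'edges]; exact hiff.mp hrepw
    have hTmem : rep (cls e) ∈ T.edgeSet := c.edges_subset_edgeSet this
    rw [hTE] at hTmem
    exact hTmem.2 (Finset.mem_coe.mpr hrepR)
  have hTne : T.edgeSet.Nonempty := by
    rw [← Set.ncard_pos (Set.toFinite _), hTm]
    omega
  have hforest := forest_bound (m - k) T hTm hTac hTne
  have hTsupp : {v : V | ∃ u, T.Adj v u} ⊆ {v : V | ∃ u, G.Adj v u} := by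
    rintro v ⟨u, hu⟩
    exact ⟨u, (G.deleteEdges_le _) hu⟩
  have hTn : {v : V | ∃ u, T.Adj v u}.ncard ≤ n :=
    Set.ncard_le_ncard hTsupp (Set.toFinite _)
  omega
end
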